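/- arXiv:math/0006118 — 2 statements merged into one kernel-verified Lean document; each statement's English description precedes it below -/
import Mathlib

section
/- There exists a universal constant ã > 0 (one may take ã = 2187) with the following property. For every integer n ≥ 3, every real c > 0, and every nonnegative integer k with k = (1/2) n log n − c n (equivalently, k < (1/2) n log n and c := ((1/2) n log n − k)/n), the k-fold convolution P^{*k} of the random-transposition measure P on S_n satisfies (1/2)(n!)^{1/2} ‖P^{*k} − U‖_2 ≥ ‖P^{*k} − U‖_TV ≥ 1 − ã e^{−2c}. -/
open Finset

open scoped Classical in
noncomputable def convPow {G : Type*} [Group G] [Fintype G] (P : G → ℝ) : ℕ → G → ℝ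
  | 0 => fun g => if g = 1 then 1 else 0
  | k + 1 => fun g => ∑ h : G, P (g * h⁻¹) * convPow P k h

noncomputable def tvDist {G : Type*} [Fintype G] (P Q : G → ℝ) : ℝ :=
  (1 / 2) * ∑ g : G, |P g - Q g|

noncomputable def l2Dist {G : Type*} [Fintype G] (P Q : G → ℝ) : ℝ :=
  Real.sqrt (∑ g : G, (P g - Q g) ^ 2)

open scoped Classical in
noncomputable def rtMeasure (n : ℕ) : Equiv.Perm (Fin n) → ℝ := fun π =>
  if π = 1 then 1 / n else if π.IsSwap then 2 / (n : ℝ) ^ 2 else 0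

noncomputable def uniformSn (n : ℕ) : Equiv.Perm (Fin n) → ℝ := fun _ => 1 / (n.factorial : ℝ)

/-!
Second moment method for the number of fixed points `F`. A random transposition is `swap i j`
for independent uniform `i, j`, and composing with it changes `F` by a local amount depending only
on `σ i` and `σ j`. Averaging over `i, j` gives `E_k F = 1 + μ_k` and `Var_k F ≤ 4 + 4 μ_k` after
`k` steps, where `μ_k = (n - 1) (1 - 2 / n) ^ k`, while `E F = 1` under the uniform measure
(Burnside). Chebyshev under `P^{*k}` and Markov under `U` on the event `{F ≥ 1 + μ_k / 2}` give
`‖P^{*k} - U‖_TV ≥ 1 - 16 / μ_k ^ 2 - 18 / μ_k`, and `μ_k ≥ (2 / 27) e^{2c}` when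
`k = n log n / 2 - c n`. The ℓ² bound is Cauchy–Schwarz.
-/

section Convolution

variable {G : Type*} [Group G] [Fintype G]

theorem sum_convPow_succ_mul (P : G → ℝ) (k : ℕ) (φ : G → ℝ) :
    ∑ g, convPow P (k + 1) g * φ g = ∑ h, convPow P k h * ∑ τ, P τ * φ (τ * h) := by
  simp only [convPow, Finset.sum_mul, Finset.mul_sum]
  rw [Finset.sum_comm]
  refine Finset.sum_congr rfl fun h _ => ?_
  refine Fintype.sum_equiv (Equiv.mulRight h⁻¹) _ _ fun g => ?_
  simp only [Equiv.coe_mulRight, inv_mul_cancel_right]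
  ring

theorem convPow_nonneg {P : G → ℝ} (hP : ∀ g, 0 ≤ P g) (k : ℕ) (g : G) :
    0 ≤ convPow P k g := by
  induction k generalizing g with
  | zero => simp only [convPow]; positivity
  | succ k ih => exact Finset.sum_nonneg fun h _ => mul_nonneg (hP _) (ih h)

theorem sum_convPow {P : G → ℝ} (hP : ∑ g, P g = 1) (k : ℕ) : ∑ g, convPow P k g = 1 := by
  induction k with
  | zero =>
    classical
    simp [convPow]
  | succ k ih => simpa [hP, ih] using sum_convPow_succ_mul P k fun _ => 1

end Convolution

section Distances

variable {α : Type*} [Fintype α]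

theorem tvDist_le_l2Dist (p q : α → ℝ) :
    tvDist p q ≤ 1 / 2 * √(Fintype.card α) * l2Dist p q := by
  have hcs := sq_sum_le_card_mul_sum_sq (s := Finset.univ) (f := fun a => |p a - q a|)
  simp only [sq_abs, Finset.card_univ] at hcs
  rw [tvDist, l2Dist, mul_assoc, ← Real.sqrt_mul (Nat.cast_nonneg _)]
  gcongr
  exact Real.le_sqrt_of_sq_le hcs

theorem sub_le_tvDist {p q : α → ℝ} (hp : ∑ a, p a = 1) (hq : ∑ a, q a = 1) (A : Finset α) :
    ∑ a ∈ A, p a - ∑ a ∈ A, q a ≤ tvDist p q := by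
  classical
  have hsum (B : Finset α) : ∑ a ∈ B, p a - ∑ a ∈ B, q a = ∑ a ∈ B, (p a - q a) :=
    (Finset.sum_sub_distrib ..).symm
  have hcompl : ∑ a ∈ Aᶜ, (p a - q a) = -∑ a ∈ A, (p a - q a) := by
    have h0 : ∑ a, (p a - q a) = 0 := by rw [Finset.sum_sub_distrib, hp, hq, sub_self]
    linarith [Finset.sum_compl_add_sum A fun a => p a - q a]
  have habs (B : Finset α) : |∑ a ∈ B, (p a - q a)| ≤ ∑ a ∈ B, |p a - q a| :=
    Finset.abs_sum_le_sum_abs _ _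
  rw [tvDist, hsum, ← Finset.sum_compl_add_sum A]
  linarith [neg_abs_le (∑ a ∈ Aᶜ, (p a - q a)), le_abs_self (∑ a ∈ A, (p a - q a)), habs A,
    habs Aᶜ]

theorem sum_filter_le_div {q f : α → ℝ} (hq : ∀ a, 0 ≤ q a) (hf : ∀ a, 0 ≤ f a) {t : ℝ}
    (ht : 0 < t) : ∑ a with t ≤ f a, q a ≤ (∑ a, q a * f a) / t := by
  rw [le_div_iff₀ ht, Finset.sum_mul]
  calc ∑ a with t ≤ f a, q a * t ≤ ∑ a with t ≤ f a, q a * f a :=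
        Finset.sum_le_sum fun a ha => mul_le_mul_of_nonneg_left (Finset.mem_filter.1 ha).2 (hq a)
    _ ≤ ∑ a, q a * f a :=
        Finset.sum_le_sum_of_subset_of_nonneg (Finset.filter_subset _ _)
          fun a _ _ => mul_nonneg (hq a) (hf a)

theorem sum_mul_sub_sq {p : α → ℝ} (hp₁ : ∑ a, p a = 1) (f : α → ℝ) :
    ∑ a, p a * (f a - ∑ b, p b * f b) ^ 2 = ∑ a, p a * f a ^ 2 - (∑ a, p a * f a) ^ 2 := by
  set m := ∑ b, p b * f b
  have : ∀ a, p a * (f a - m) ^ 2 = p a * f a ^ 2 - 2 * m * (p a * f a) + m ^ 2 * p a :=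
    fun a => by ring
  simp only [this, Finset.sum_add_distrib, Finset.sum_sub_distrib, ← Finset.mul_sum, hp₁]
  ring

theorem sq_sum_mul_le_sum_mul_sq {p : α → ℝ} (hp : ∀ a, 0 ≤ p a) (hp₁ : ∑ a, p a = 1)
    (f : α → ℝ) : (∑ a, p a * f a) ^ 2 ≤ ∑ a, p a * f a ^ 2 := by
  have := Finset.sum_nonneg fun a (_ : a ∈ Finset.univ) =>
    mul_nonneg (hp a) (sq_nonneg (f a - ∑ b, p b * f b))
  rw [sum_mul_sub_sq hp₁] at this
  linarith

theorem one_sub_le_tvDist_of_moments {p q f : α → ℝ} (hp : ∀ a, 0 ≤ p a) (hp₁ : ∑ a, p a = 1)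
    (hq : ∀ a, 0 ≤ q a) (hq₁ : ∑ a, q a = 1) (hf : ∀ a, 0 ≤ f a) {m μ V : ℝ} (hμ : 0 < μ)
    (hqf : ∑ a, q a * f a = m) (hpf : ∑ a, p a * f a = m + μ)
    (hV : ∑ a, p a * f a ^ 2 - (m + μ) ^ 2 ≤ V) :
    1 - 4 * V / μ ^ 2 - 2 * m / μ ≤ tvDist p q := by
  have hm : 0 ≤ m := hqf ▸ Finset.sum_nonneg fun a _ => mul_nonneg (hq a) (hf a)
  have hq_event : ∑ a with m + μ / 2 ≤ f a, q a ≤ 2 * m / μ :=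
    calc ∑ a with m + μ / 2 ≤ f a, q a ≤ m / (m + μ / 2) :=
          hqf ▸ sum_filter_le_div hq hf (by linarith)
      _ ≤ m / (μ / 2) := div_le_div_of_nonneg_left hm (by linarith) (by linarith)
      _ = 2 * m / μ := by field_simp
  have hp_compl : ∑ a with ¬m + μ / 2 ≤ f a, p a ≤ 4 * V / μ ^ 2 :=
    calc ∑ a with ¬m + μ / 2 ≤ f a, p a ≤ ∑ a with (μ / 2) ^ 2 ≤ (f a - (m + μ)) ^ 2, p a := by
          refine Finset.sum_le_sum_of_subset_of_nonneg (fun a ha => ?_) fun a _ _ => hp a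
          simp only [Finset.mem_filter, Finset.mem_univ, true_and, not_le] at ha ⊢
          nlinarith
      _ ≤ (∑ a, p a * (f a - (m + μ)) ^ 2) / (μ / 2) ^ 2 :=
          sum_filter_le_div hp (fun a => sq_nonneg _) (by positivity)
      _ ≤ 4 * V / μ ^ 2 := by
          rw [← hpf, sum_mul_sub_sq hp₁, hpf, div_pow, div_div_eq_mul_div]
          gcongr ?_ / _
          linarith
  have hsplit := Finset.sum_filter_add_sum_filter_not Finset.univ (fun a => m + μ / 2 ≤ f a) p
  linarith [sub_le_tvDist hp₁ hq₁ {a | m + μ / 2 ≤ f a}]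

end Distances

open Equiv

theorem Equiv.swap_eq_swap_iff {α : Type*} [DecidableEq α] {a b i j : α} (hab : a ≠ b) :
    swap i j = swap a b ↔ i = a ∧ j = b ∨ i = b ∧ j = a := by
  constructor
  · intro h
    have hij : i ≠ j := by rintro rfl; exact hab (swap_eq_one_iff.1 (h ▸ swap_self i))
    have hi : swap a b i = j := by rw [← h, swap_apply_left]
    rcases (swap_apply_ne_self_iff.1 (hi ▸ hij.symm)).2 with rfl | rfl
    · exact .inl ⟨rfl, by rw [← hi, swap_apply_left]⟩
    · exact .inr ⟨rfl, by rw [← hi, swap_apply_right]⟩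
  · rintro (⟨rfl, rfl⟩ | ⟨rfl, rfl⟩)
    · rfl
    · exact swap_comm _ _

section RandomTransposition

variable {n : ℕ}

theorem rtMeasure_eq_card_div (π : Perm (Fin n)) :
    rtMeasure n π = #{p : Fin n × Fin n | swap p.1 p.2 = π} / (n : ℝ) ^ 2 := by
  rw [rtMeasure]
  split_ifs with h1 hswap
  · subst h1
    have : ({p : Fin n × Fin n | swap p.1 p.2 = 1} : Finset _) = Finset.univ.diag := by
      ext; simp [swap_eq_one_iff]
    rw [this, Finset.diag_card, Finset.card_univ, Fintype.card_fin]
    field_simp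
  · obtain ⟨a, b, hab, rfl⟩ := hswap
    have : ({p : Fin n × Fin n | swap p.1 p.2 = swap a b} : Finset _) = {(a, b), (b, a)} := by
      ext ⟨i, j⟩
      simp [swap_eq_swap_iff hab]
    rw [this, Finset.card_pair (by simp [hab])]
    norm_num
  · have : ({p : Fin n × Fin n | swap p.1 p.2 = π} : Finset _) = ∅ := by
      refine Finset.filter_eq_empty_iff.2 fun ⟨i, j⟩ _ h => ?_
      by_cases hij : i = j
      · exact h1 (by rw [← h, hij, swap_self]; rfl)
      · exact hswap ⟨i, j, hij, h.symm⟩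
    simp [this]

theorem sum_rtMeasure_mul (φ : Perm (Fin n) → ℝ) :
    ∑ π, rtMeasure n π * φ π = (∑ i, ∑ j, φ (swap i j)) / (n : ℝ) ^ 2 := by
  simp_rw [rtMeasure_eq_card_div, div_mul_eq_mul_div, ← Finset.sum_div, ← Fintype.sum_prod_type',
    ← Finset.sum_fiberwise Finset.univ (fun p : Fin n × Fin n => swap p.1 p.2)]
  congr 1
  refine Finset.sum_congr rfl fun π _ => ?_
  rw [Finset.sum_congr rfl fun p hp => by rw [(Finset.mem_filter.1 hp).2], Finset.sum_const,
    nsmul_eq_mul]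

theorem rtMeasure_nonneg (π : Perm (Fin n)) : 0 ≤ rtMeasure n π := by
  rw [rtMeasure_eq_card_div]; positivity

theorem sum_rtMeasure (hn : n ≠ 0) : ∑ π, rtMeasure n π = 1 := by
  have := sum_rtMeasure_mul (n := n) fun _ => 1
  simp only [mul_one, Finset.sum_const, Finset.card_univ, Fintype.card_fin, nsmul_eq_mul] at this
  rw [this]
  field_simp

end RandomTransposition

section FixedPoints

variable {α : Type*} [Fintype α] [DecidableEq α]

noncomputable def numFixedPoints (σ : Perm α) : ℝ := ∑ x, if σ x = x then 1 else 0

theorem numFixedPoints_nonneg (σ : Perm α) : 0 ≤ numFixedPoints σ :=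
  Finset.sum_nonneg fun _ _ => by positivity

theorem numFixedPoints_one : numFixedPoints (1 : Perm α) = Fintype.card α := by
  simp [numFixedPoints]

/-- Burnside's lemma for the transitive action of `Perm α` on `α`. -/
theorem sum_numFixedPoints [Nonempty α] :
    ∑ σ : Perm α, numFixedPoints σ = (Fintype.card α).factorial := by
  have hcard (σ : Perm α) : numFixedPoints σ = Fintype.card (MulAction.fixedBy α σ) := by
    rw [Fintype.card_subtype]; simp [numFixedPoints, MulAction.mem_fixedBy, Finset.sum_boole]
  have : Unique (MulAction.orbitRel.Quotient (Perm α) α) :=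
    ((MulAction.pretransitive_iff_unique_quotient_of_nonempty _ _).1 inferInstance).some
  simp_rw [hcard]
  exact_mod_cast (MulAction.sum_card_fixedBy_eq_card_orbits_mul_card_group (Perm α) α).trans
    (by simp [Fintype.card_perm])

noncomputable def fixedPointDelta (σ : Perm α) (i j : α) : ℝ :=
  (if σ i = j then 1 else 0) + (if σ j = i then 1 else 0)
    - (if σ i = i then 1 else 0) - (if σ j = j then 1 else 0)

theorem numFixedPoints_swap_mul (σ : Perm α) (i j : α) :
    numFixedPoints (swap i j * σ) = numFixedPoints σ + fixedPointDelta σ i j := by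
  rcases eq_or_ne i j with rfl | hij
  · simp [fixedPointDelta, ← Perm.one_def]
  have key (x : α) : (if (swap i j * σ) x = x then (1 : ℝ) else 0) = (if σ x = x then 1 else 0)
      + (if x = i then (if σ i = j then 1 else 0) - (if σ i = i then 1 else 0) else 0)
      + (if x = j then (if σ j = i then 1 else 0) - (if σ j = j then 1 else 0) else 0) := by
    simp only [Perm.mul_apply, swap_apply_eq_iff]
    by_cases hxi : x = i
    · subst hxi; simp [hij]
    by_cases hxj : x = j
    · subst hxj; simp [hij.symm]
    simp [swap_apply_of_ne_of_ne hxi hxj, hxi, hxj]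
  simp only [numFixedPoints, key, Finset.sum_add_distrib, Finset.sum_ite_eq', Finset.mem_univ,
    if_true, fixedPointDelta]
  ring

theorem sum_sum_indicators (σ : Perm α) (a b c d : ℝ) :
    ∑ i, ∑ j, (a * (if σ i = j then 1 else 0) + b * (if σ j = i then 1 else 0)
        + c * (if σ i = i then 1 else 0) + d * (if σ j = j then 1 else 0))
      = (a + b) * Fintype.card α + (c + d) * Fintype.card α * numFixedPoints σ := by
  have h₁ : ∑ i, ∑ j, (if σ i = j then (1 : ℝ) else 0) = Fintype.card α := by simp
  have h₂ : ∑ i, ∑ j, (if σ j = i then (1 : ℝ) else 0) = Fintype.card α := by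
    rw [Finset.sum_comm]; exact h₁
  have h₃ : ∑ i, ∑ _j : α, (if σ i = i then (1 : ℝ) else 0)
      = Fintype.card α * numFixedPoints σ := by
    simp only [Finset.sum_const, Finset.card_univ, nsmul_eq_mul, numFixedPoints, Finset.mul_sum]
  have h₄ : ∑ _i : α, ∑ j, (if σ j = j then (1 : ℝ) else 0)
      = Fintype.card α * numFixedPoints σ := by
    rw [Finset.sum_comm]; exact h₃
  simp only [Finset.sum_add_distrib, ← Finset.mul_sum, h₁, h₂, h₃, h₄]
  ring

theorem sum_sum_fixedPointDelta (σ : Perm α) :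
    ∑ i, ∑ j, fixedPointDelta σ i j
      = 2 * Fintype.card α - 2 * Fintype.card α * numFixedPoints σ := by
  have := sum_sum_indicators σ 1 1 (-1) (-1)
  simp only [one_mul, neg_one_mul, ← sub_eq_add_neg] at this
  simp only [fixedPointDelta, this]
  ring

theorem sum_sum_fixedPointDelta_sq_le (σ : Perm α) :
    ∑ i, ∑ j, fixedPointDelta σ i j ^ 2
      ≤ 4 * Fintype.card α + 4 * Fintype.card α * numFixedPoints σ := by
  have hle (i j : α) : fixedPointDelta σ i j ^ 2 ≤ 2 * (if σ i = j then 1 else 0)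
      + 2 * (if σ j = i then 1 else 0) + 2 * (if σ i = i then 1 else 0)
      + 2 * (if σ j = j then 1 else 0) := by
    rcases eq_or_ne i j with rfl | hij
    · simp [fixedPointDelta]; positivity
    unfold fixedPointDelta
    split_ifs <;> simp_all <;> norm_num
  calc _ ≤ _ := Finset.sum_le_sum fun i _ => Finset.sum_le_sum fun j _ => hle i j
    _ = _ := by rw [sum_sum_indicators]; ring

end FixedPoints

section FixedPointMoments

variable {n : ℕ}

theorem sum_rtMeasure_mul_numFixedPoints (hn : n ≠ 0) (σ : Perm (Fin n)) :
    ∑ τ, rtMeasure n τ * numFixedPoints (τ * σ) = (n - 2) / n * numFixedPoints σ + 2 / n := by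
  rw [sum_rtMeasure_mul]
  simp only [numFixedPoints_swap_mul, Finset.sum_add_distrib, sum_sum_fixedPointDelta,
    Finset.sum_const, Finset.card_univ, Fintype.card_fin, nsmul_eq_mul]
  field_simp
  ring

theorem sum_rtMeasure_mul_numFixedPoints_sq_le (hn : n ≠ 0) (σ : Perm (Fin n)) :
    ∑ τ, rtMeasure n τ * numFixedPoints (τ * σ) ^ 2
      ≤ (n - 4) / n * numFixedPoints σ ^ 2 + 8 / n * numFixedPoints σ + 4 / n := by
  have hexpand (i j : Fin n) : numFixedPoints (swap i j * σ) ^ 2 = numFixedPoints σ ^ 2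
      + 2 * numFixedPoints σ * fixedPointDelta σ i j + fixedPointDelta σ i j ^ 2 := by
    rw [numFixedPoints_swap_mul]; ring
  have hδ := sum_sum_fixedPointDelta_sq_le σ
  rw [Fintype.card_fin] at hδ
  rw [sum_rtMeasure_mul]
  simp only [hexpand, Finset.sum_add_distrib, ← Finset.mul_sum, sum_sum_fixedPointDelta,
    Finset.sum_const, Finset.card_univ, Fintype.card_fin, nsmul_eq_mul]
  rw [div_le_iff₀ (by positivity)]
  have : ((n - 4) / n * numFixedPoints σ ^ 2 + 8 / n * numFixedPoints σ + 4 / n) * (n : ℝ) ^ 2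
      = (n - 4) * n * numFixedPoints σ ^ 2 + 8 * n * numFixedPoints σ + 4 * n := by
    field_simp
  rw [this]
  nlinarith

noncomputable def fixedPointMoment (n k m : ℕ) : ℝ :=
  ∑ σ, convPow (rtMeasure n) k σ * numFixedPoints σ ^ m

theorem fixedPointMoment_zero (m : ℕ) : fixedPointMoment n 0 m = (n : ℝ) ^ m := by
  classical
  simp [fixedPointMoment, convPow, numFixedPoints_one]

theorem fixedPointMoment_one (hn : n ≠ 0) (k : ℕ) :
    fixedPointMoment n k 1 = 1 + (n - 1) * ((n - 2) / n) ^ k := by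
  induction k with
  | zero => simp [fixedPointMoment_zero]
  | succ k ih =>
    have hstep (σ : Perm (Fin n)) : convPow (rtMeasure n) k σ
        * ∑ τ, rtMeasure n τ * numFixedPoints (τ * σ) ^ 1
        = (n - 2) / n * (convPow (rtMeasure n) k σ * numFixedPoints σ ^ 1)
          + 2 / n * convPow (rtMeasure n) k σ := by
      simp only [pow_one, sum_rtMeasure_mul_numFixedPoints hn]; ring
    rw [fixedPointMoment, sum_convPow_succ_mul]
    simp only [hstep, Finset.sum_add_distrib, ← Finset.mul_sum, sum_convPow (sum_rtMeasure hn)]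
    have hr : ((n : ℝ) - 2) / n + 2 / n = 1 := by field_simp; ring
    rw [← fixedPointMoment, ih, pow_succ]
    linear_combination hr

theorem fixedPointMoment_two_succ_le (hn : n ≠ 0) (k : ℕ) :
    fixedPointMoment n (k + 1) 2
      ≤ (n - 4) / n * fixedPointMoment n k 2 + 8 / n * fixedPointMoment n k 1 + 4 / n := by
  rw [fixedPointMoment, sum_convPow_succ_mul]
  calc _ ≤ ∑ σ, convPow (rtMeasure n) k σ
          * ((n - 4) / n * numFixedPoints σ ^ 2 + 8 / n * numFixedPoints σ + 4 / n) :=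
        Finset.sum_le_sum fun σ _ => mul_le_mul_of_nonneg_left
          (sum_rtMeasure_mul_numFixedPoints_sq_le hn σ) (convPow_nonneg rtMeasure_nonneg k σ)
    _ = (n - 4) / n * ∑ σ, convPow (rtMeasure n) k σ * numFixedPoints σ ^ 2
          + 8 / n * ∑ σ, convPow (rtMeasure n) k σ * numFixedPoints σ ^ 1
          + 4 / n * ∑ σ, convPow (rtMeasure n) k σ := by
        simp only [Finset.mul_sum, ← Finset.sum_add_distrib]
        exact Finset.sum_congr rfl fun σ _ => by ring
    _ = _ := by rw [sum_convPow (sum_rtMeasure hn), mul_one, fixedPointMoment, fixedPointMoment]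

theorem fixedPointMoment_one_sq_le (hn : n ≠ 0) (k : ℕ) :
    fixedPointMoment n k 1 ^ 2 ≤ fixedPointMoment n k 2 := by
  simpa only [fixedPointMoment, pow_one] using sq_sum_mul_le_sum_mul_sq
    (convPow_nonneg rtMeasure_nonneg k) (sum_convPow (sum_rtMeasure hn) k) numFixedPoints

theorem fixedPointMoment_two_sub_sq_le (hn : 3 ≤ n) (k : ℕ) :
    fixedPointMoment n k 2 - fixedPointMoment n k 1 ^ 2
      ≤ 4 + 4 * ((n - 1) * ((n - 2) / n) ^ k) := by
  have hn₀ : n ≠ 0 := by omega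
  have hn₃ : (3 : ℝ) ≤ n := by exact_mod_cast hn
  set x : ℝ := 1 / n with hx
  have hx₀ : 0 < x := by positivity
  have hx₃ : x ≤ 1 / 3 := by rw [hx]; gcongr
  have hdiv (a : ℝ) : (n - a) / n = 1 - a * x := by rw [hx]; field_simp
  induction k with
  | zero => simp [fixedPointMoment_zero]; linarith
  | succ k ih =>
    have hstep := fixedPointMoment_two_succ_le hn₀ k
    have hM₁ := fixedPointMoment_one hn₀ k
    have hM₁' := fixedPointMoment_one hn₀ (k + 1)
    have hvar := fixedPointMoment_one_sq_le hn₀ k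
    have hμ' : ((n : ℝ) - 1) * ((n - 2) / n) ^ (k + 1)
        = (1 - 2 * x) * ((n - 1) * ((n - 2) / n) ^ k) := by
      rw [pow_succ, hdiv]; ring
    rw [hμ'] at hM₁' ⊢
    rw [hdiv, show (8 : ℝ) / n = 8 * x by rw [hx]; ring,
      show (4 : ℝ) / n = 4 * x by rw [hx]; ring] at hstep
    have hμ : 0 ≤ ((n : ℝ) - 1) * ((n - 2) / n) ^ k :=
      mul_nonneg (by linarith) (pow_nonneg (by rw [hdiv]; linarith) k)
    generalize ((n : ℝ) - 1) * ((n - 2) / n) ^ k = μ at *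
    rw [hM₁']
    rw [hM₁] at hstep hvar ih
    have hxμ := mul_nonneg hx₀.le hμ
    -- `1 - 4 x = (n - 4) / n` is negative for `n = 3`; there `Var ≥ 0` replaces `ih`.
    rcases le_or_gt x (1 / 4) with hx₄ | hx₄
    · nlinarith [mul_le_mul_of_nonneg_left ih (by linarith : (0 : ℝ) ≤ 1 - 4 * x),
        sq_nonneg (x * μ)]
    · nlinarith [mul_le_mul_of_nonpos_left hvar (by linarith : (1 : ℝ) - 4 * x ≤ 0),
        mul_nonneg (by linarith : (0 : ℝ) ≤ 1 / 3 - x) hμ, sq_nonneg (x * μ)]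

end FixedPointMoments

section Asymptotics

theorem log_le_mul_log_three {x : ℝ} (hx : 3 ≤ x) : Real.log x ≤ (x - 2) * Real.log 3 := by
  have he : Real.exp 1 ≤ 3 := by linarith [Real.exp_one_lt_d9]
  have h := Real.log_div_self_antitoneOn (Set.mem_Ici.2 he) (Set.mem_Ici.2 (he.trans hx)) hx
  rw [div_le_div_iff₀ (by linarith) (by norm_num)] at h
  nlinarith [Real.log_nonneg (by norm_num : (1 : ℝ) ≤ 3)]

theorem exp_two_mul_le_mul_pow {n k : ℕ} (hn : 3 ≤ n) {c : ℝ} (hc : 0 ≤ c)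
    (hk : (k : ℝ) = 1 / 2 * n * Real.log n - c * n) :
    2 / 27 * Real.exp (2 * c) ≤ (n - 1) * ((n - 2) / n) ^ k := by
  have hn₃ : (3 : ℝ) ≤ n := by exact_mod_cast hn
  have hr : 0 < ((n : ℝ) - 2) / n := div_pos (by linarith) (by linarith)
  have hlog_r : -(2 / (n - 2)) ≤ Real.log (((n : ℝ) - 2) / n) := by
    have h := Real.one_sub_inv_le_log_of_pos hr
    have hn₂ : (n : ℝ) - 2 ≠ 0 := by linarith
    rw [inv_div, show 1 - (n : ℝ) / (n - 2) = -(2 / (n - 2)) by field_simp; ring] at h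
    exact h
  have hlog9 : Real.log 9 = 2 * Real.log 3 := by
    rw [show (9 : ℝ) = 3 ^ 2 by norm_num, Real.log_pow]; norm_num
  have hexponent : 2 * c - Real.log n - Real.log 9 ≤ k * Real.log (((n : ℝ) - 2) / n) := by
    have h2 : (2 * c - Real.log n - Real.log 9) * (n - 2) ≤ -(2 * k) := by
      rw [hk, hlog9]; nlinarith [log_le_mul_log_three hn₃]
    calc 2 * c - Real.log n - Real.log 9 ≤ k * -(2 / (n - 2)) := by
          rw [show (k : ℝ) * -(2 / (n - 2)) = -(2 * k) / (n - 2) by ring, le_div_iff₀ (by linarith)]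
          exact h2
      _ ≤ _ := mul_le_mul_of_nonneg_left hlog_r k.cast_nonneg
  have hpow : Real.exp (2 * c) / (9 * n) ≤ (((n : ℝ) - 2) / n) ^ k :=
    calc Real.exp (2 * c) / (9 * n) = Real.exp (2 * c - Real.log n - Real.log 9) := by
          rw [Real.exp_sub, Real.exp_sub, Real.exp_log (by linarith), Real.exp_log (by norm_num)]
          ring
      _ ≤ Real.exp (k * Real.log (((n : ℝ) - 2) / n)) := Real.exp_le_exp.2 hexponent
      _ = (((n : ℝ) - 2) / n) ^ k := by rw [← Real.log_pow, Real.exp_log (pow_pos hr k)]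
  have hfrac : (2 / 27 : ℝ) ≤ (n - 1) / (9 * n) := by
    rw [div_le_div_iff₀ (by norm_num) (by linarith)]; linarith
  calc 2 / 27 * Real.exp (2 * c) ≤ (n - 1) / (9 * n) * Real.exp (2 * c) := by gcongr
    _ = (n - 1) * (Real.exp (2 * c) / (9 * n)) := by ring
    _ ≤ _ := by gcongr; linarith

end Asymptotics

section Cutoff

variable {n : ℕ}

theorem sum_uniformSn : ∑ σ, uniformSn n σ = 1 := by
  simp [uniformSn, Fintype.card_perm, Nat.factorial_ne_zero]

theorem sum_uniformSn_mul_numFixedPoints (hn : n ≠ 0) :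
    ∑ σ, uniformSn n σ * numFixedPoints σ = 1 := by
  have : Nonempty (Fin n) := ⟨⟨0, Nat.pos_of_ne_zero hn⟩⟩
  simp only [uniformSn]
  rw [← Finset.mul_sum, sum_numFixedPoints, Fintype.card_fin]
  field_simp

theorem one_sub_le_tvDist_convPow_rtMeasure (hn : 3 ≤ n) (k : ℕ) :
    1 - 16 / ((n - 1) * ((n - 2) / n) ^ k) ^ 2 - 18 / ((n - 1) * ((n - 2) / n) ^ k)
      ≤ tvDist (convPow (rtMeasure n) k) (uniformSn n) := by
  have hn₀ : n ≠ 0 := by omega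
  have hn₃ : (3 : ℝ) ≤ n := by exact_mod_cast hn
  have hμ : 0 < ((n : ℝ) - 1) * ((n - 2) / n) ^ k :=
    mul_pos (by linarith) (pow_pos (div_pos (by linarith) (by linarith)) k)
  have hmean := fixedPointMoment_one hn₀ k
  have hvar := fixedPointMoment_two_sub_sq_le hn k
  rw [hmean] at hvar
  simp only [fixedPointMoment, pow_one] at hmean hvar
  generalize ((n : ℝ) - 1) * ((n - 2) / n) ^ k = μ at *
  have h := one_sub_le_tvDist_of_moments (convPow_nonneg rtMeasure_nonneg k)
    (sum_convPow (sum_rtMeasure hn₀) k) (fun _ => by simp only [uniformSn]; positivity)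
    sum_uniformSn numFixedPoints_nonneg hμ (sum_uniformSn_mul_numFixedPoints hn₀) hmean hvar
  convert h using 1
  field_simp
  ring

end Cutoff

/-- There exists a universal constant `ã > 0` (one may take `ã = 2187`) such that for every
`n ≥ 3`, every `c > 0`, and every nonnegative integer `k` with
`k = (1/2) n log n − c n`, the `k`-fold convolution of the random-transposition measure on
`Sₙ` satisfies `(1/2)(n!)^{1/2} ‖P^{*k} − U‖₂ ≥ ‖P^{*k} − U‖_TV ≥ 1 − ã e^{−2c}`. -/
theorem stmt1 :
    ∃ atilde : ℝ, 0 < atilde ∧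
      ∀ n : ℕ, 3 ≤ n → ∀ c : ℝ, 0 < c → ∀ k : ℕ,
        (k : ℝ) = (1 / 2 : ℝ) * n * Real.log n - c * n →
        (1 / 2 : ℝ) * Real.sqrt (n.factorial : ℝ) *
            l2Dist (convPow (rtMeasure n) k) (uniformSn n) ≥
          tvDist (convPow (rtMeasure n) k) (uniformSn n) ∧
        tvDist (convPow (rtMeasure n) k) (uniformSn n) ≥ 1 - atilde * Real.exp (-2 * c) := by
  refine ⟨3159, by norm_num, fun n hn c hc k hk => ⟨?_, ?_⟩⟩
  · simpa [Fintype.card_perm] using tvDist_le_l2Dist (convPow (rtMeasure n) k) (uniformSn n)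
  · have hE : 1 ≤ Real.exp (2 * c) := Real.one_le_exp (by linarith)
    have hμ := exp_two_mul_le_mul_pow hn hc.le hk
    have htv := one_sub_le_tvDist_convPow_rtMeasure hn k
    generalize ((n : ℝ) - 1) * ((n - 2) / n) ^ k = μ at hμ htv
    rw [neg_mul, Real.exp_neg, ← div_eq_mul_inv]
    generalize Real.exp (2 * c) = E at hE hμ ⊢
    have hμ₀ : 0 < μ := by linarith
    have hconst : 16 / μ ^ 2 + 18 / μ ≤ 3159 / E := by
      rw [div_add_div _ _ (by positivity) hμ₀.ne', div_le_div_iff₀ (by positivity) (by linarith)]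
      nlinarith [mul_le_mul hμ hμ (by positivity) hμ₀.le]
    linarith
end

section
/- For every integer n ≥ 3, every real c ≥ 0, and every natural number k with k ≤ (1/2) n log n − c n, one has (n − 1)(1 − 2/n)^k ≥ (2/27) e^{2c}. -/
/-!
With `L = log (1 - 2/n)`, the elementary bounds `1 - 1/y ≤ log y ≤ y - 1` give
`-2/(n-2) ≤ L ≤ -2/n`. Since `L < 0`, the hypothesis on `k` yields
`k L ≥ (n log n / 2) L - c n L ≥ -n log n / (n-2) + 2c ≥ -log n - 2 log 3 + 2c`,
the last step because `n ≤ 3^(n-2)`. Exponentiating, `(1 - 2/n)^k ≥ e^{2c} / (9n)`,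
and `(n-1) / (9n) ≥ 2/27` for `n ≥ 3`.
-/

open Real

namespace Real

lemma log_one_sub_two_div_le {x : ℝ} (hx : 2 < x) : log (1 - 2 / x) ≤ -(2 / x) := by
  have h := log_le_sub_one_of_pos (x := 1 - 2 / x) (by rw [sub_pos, div_lt_one] <;> linarith)
  linarith

lemma neg_two_div_sub_two_le_log_one_sub_two_div {x : ℝ} (hx : 2 < x) :
    -(2 / (x - 2)) ≤ log (1 - 2 / x) := by
  have hpos : 0 < 1 - 2 / x := by rw [sub_pos, div_lt_one] <;> linarith
  have h := one_sub_inv_le_log_of_pos hpos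
  have hinv : 1 - (1 - 2 / x)⁻¹ = -(2 / (x - 2)) := by
    field_simp [(by linarith : x - 2 ≠ 0), (by linarith : x ≠ 0)]
    ring
  linarith

lemma log_le_sub_two_mul_log_three {x : ℝ} (hx : 3 ≤ x) : log x ≤ (x - 2) * log 3 := by
  have hsplit : log x = log 3 + log (x / 3) := by
    rw [← log_mul (by norm_num) (by positivity)]
    congr 1
    field_simp
  have hdiv : log (x / 3) ≤ x / 3 - 1 := log_le_sub_one_of_pos (by positivity)
  have hlog3 : 1 - (3 : ℝ)⁻¹ ≤ log 3 := one_sub_inv_le_log_of_pos (by norm_num)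
  nlinarith

lemma exp_two_mul_div_le_one_sub_two_div_pow {x c : ℝ} (hx : 3 ≤ x) (hc : 0 ≤ c) {k : ℕ}
    (hk : (k : ℝ) ≤ x * log x / 2 - c * x) :
    exp (2 * c) / (9 * x) ≤ (1 - 2 / x) ^ k := by
  have hx0 : 0 < x := by linarith
  have hx2 : 0 < x - 2 := by linarith
  set L := log (1 - 2 / x)
  have hL_upper : L ≤ -(2 / x) := log_one_sub_two_div_le (by linarith)
  have hL_lower : -(2 / (x - 2)) ≤ L := neg_two_div_sub_two_le_log_one_sub_two_div (by linarith)
  have hL_neg : L ≤ 0 := hL_upper.trans (by rw [neg_nonpos]; positivity)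
  have hlogx : 0 ≤ log x := log_nonneg (by linarith)
  have hlog_ratio : log x / (x - 2) ≤ log 3 := by
    rw [div_le_iff₀ hx2, mul_comm]
    exact log_le_sub_two_mul_log_three hx
  have hexponent : 2 * c - log x - 2 * log 3 ≤ k * L := by
    calc 2 * c - log x - 2 * log 3
        ≤ 2 * c - log x - 2 * (log x / (x - 2)) := by linarith
      _ = x * log x / 2 * -(2 / (x - 2)) + c * x * (2 / x) := by
          field_simp
          ring
      _ ≤ x * log x / 2 * L + c * x * -L := by
          gcongr
          linarith
      _ = (x * log x / 2 - c * x) * L := by ring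
      _ ≤ k * L := mul_le_mul_of_nonpos_right hk hL_neg
  have hpow : (1 - 2 / x) ^ k = exp (k * L) := by
    rw [exp_nat_mul, exp_log (by rw [sub_pos, div_lt_one hx0]; linarith)]
  have hnine : exp (2 * log 3) = 9 := by
    rw [two_mul, exp_add, exp_log (by norm_num)]
    norm_num
  calc exp (2 * c) / (9 * x) = exp (2 * c - log x - 2 * log 3) := by
        rw [exp_sub, exp_sub, exp_log hx0, hnine]
        ring
    _ ≤ (1 - 2 / x) ^ k := by
        rw [hpow]
        exact exp_le_exp.mpr hexponent

end Real

/-- For every `n ≥ 3`, every `c ≥ 0`, and every natural number `k` with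
`k ≤ (1/2) n log n − c n`, one has `(n − 1)(1 − 2/n)^k ≥ (2/27) e^{2c}`. -/
theorem stmt4 (n : ℕ) (hn : 3 ≤ n) (c : ℝ) (hc : 0 ≤ c) (k : ℕ)
    (hk : (k : ℝ) ≤ (1 / 2 : ℝ) * n * Real.log n - c * n) :
    ((n : ℝ) - 1) * (1 - 2 / n) ^ k ≥ (2 / 27 : ℝ) * Real.exp (2 * c) := by
  have hn3 : (3 : ℝ) ≤ n := by exact_mod_cast hn
  have hpow := exp_two_mul_div_le_one_sub_two_div_pow hn3 hc (k := k) (by linarith)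
  have hratio : (2 / 27 : ℝ) ≤ (n - 1) / (9 * n) := by
    rw [le_div_iff₀ (by positivity)]
    linarith
  calc (2 / 27 : ℝ) * exp (2 * c) ≤ (n - 1) / (9 * n) * exp (2 * c) := by gcongr
    _ = (n - 1) * (exp (2 * c) / (9 * n)) := by ring
    _ ≤ (n - 1) * (1 - 2 / n) ^ k := by gcongr; linarith
end
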